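/- Let (y_n, z_n), for n ≥ 1, be the orbit of the reduced local structure map F for rule 14 started at (y_1, z_1) = (3/8, 7/32). Then (y_n, z_n) converges to (1/4, 0) as n → ∞. -/

import Mathlib

/-!
Write `u = y - 1/4`. On the trapping region `1/4 < y < z + 1/4`, `0 < z ≤ 7/32`, which contains the
starting point, the map satisfies `u' + u = z` and `z' ≤ z - u z / 4`, with `u, z > 0`. So `z`
decreases to some `L ≥ 0`, and the drops `z - z'` bound `L u / 4`, forcing `L u → 0`; then also
`L z = L u + L u' → 0`, i.e. `L² = 0`. Finally `0 < u < z → 0`.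
-/

open Filter

/-- Reduced two-dimensional local structure map for rule 14.  In Lean,
division by zero yields zero, matching the convention that the fraction
`(4y-1)(y-z)z/y` is taken to be `0` whenever `y = 0`. -/
noncomputable def F (p : ℝ × ℝ) : ℝ × ℝ :=
  (1/2 - p.1 + p.2, p.2 - (4 * p.1 - 1) * (p.1 - p.2) * p.2 / p.1)

open Topology Set

theorem tendsto_zero_of_add_succ_eq_of_le_sub_mul {u z : ℕ → ℝ} {c : ℝ} (hc : 0 < c)
    (hu : ∀ n, 0 ≤ u n) (hsum : ∀ n, u n + u (n + 1) = z n)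
    (hdec : ∀ n, z (n + 1) ≤ z n - c * (u n * z n)) :
    Tendsto u atTop (𝓝 0) ∧ Tendsto z atTop (𝓝 0) := by
  have hz : ∀ n, 0 ≤ z n := fun n => hsum n ▸ add_nonneg (hu n) (hu (n + 1))
  have hanti : Antitone z := antitone_nat_of_succ_le fun n => by
    linarith [hdec n, mul_nonneg hc.le (mul_nonneg (hu n) (hz n))]
  obtain ⟨L, hL⟩ : ∃ L, Tendsto z atTop (𝓝 L) :=
    ⟨_, tendsto_atTop_ciInf hanti ⟨0, by rintro _ ⟨n, rfl⟩; exact hz n⟩⟩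
  have hL0 : 0 ≤ L := ge_of_tendsto' hL hz
  have hdrop : Tendsto (fun n => (z n - z (n + 1)) / c) atTop (𝓝 0) := by
    simpa using (hL.sub (hL.comp (tendsto_add_atTop_nat 1))).div_const c
  have hLu : Tendsto (fun n => L * u n) atTop (𝓝 0) := by
    refine squeeze_zero (fun n => mul_nonneg hL0 (hu n)) (fun n => ?_) hdrop
    calc L * u n ≤ u n * z n := by nlinarith [hanti.le_of_tendsto hL n, hu n]
      _ ≤ (z n - z (n + 1)) / c := by rw [le_div_iff₀ hc]; linarith [hdec n]
  have hLz : Tendsto (fun n => L * z n) atTop (𝓝 0) := by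
    simpa [← hsum, mul_add] using hLu.add (hLu.comp (tendsto_add_atTop_nat 1))
  obtain rfl : L = 0 := mul_self_eq_zero.mp (tendsto_nhds_unique (hL.const_mul L) hLz)
  exact ⟨squeeze_zero hu (fun n => by linarith [hsum n, hu (n + 1)]) hL, hL⟩

noncomputable def correction (p : ℝ × ℝ) : ℝ := (4 * p.1 - 1) * (p.1 - p.2) * p.2 / p.1

theorem F_eq (p : ℝ × ℝ) : F p = (1/2 - p.1 + p.2, p.2 - correction p) := rfl

def trappingRegion : Set (ℝ × ℝ) :=
  {p | 1/4 < p.1 ∧ p.1 < p.2 + 1/4 ∧ 0 < p.2 ∧ p.2 ≤ 7/32}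

section trappingRegion

variable {p : ℝ × ℝ} (hp : p ∈ trappingRegion)
include hp

theorem correction_lt_fst_sub : correction p < p.1 - 1/4 := by
  obtain ⟨h1, h2, h3, h4⟩ := hp
  have hyz : 4 * (p.1 - p.2) * p.2 < p.1 := by
    nlinarith [mul_pos h3 (show 0 < 1/4 - (p.1 - p.2) by linarith)]
  rw [correction, div_lt_iff₀ (by linarith)]
  nlinarith [mul_lt_mul_of_pos_left hyz (show 0 < p.1 - 1/4 by linarith)]

theorem correction_lt_snd : correction p < p.2 := by
  obtain ⟨h1, h2, h3, h4⟩ := hp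
  have hyz : (4 * p.1 - 1) * (p.1 - p.2) < p.1 := by
    nlinarith [mul_pos (show 0 < 4 * p.2 - (4 * p.1 - 1) by linarith)
        (show 0 < p.1 - p.2 by linarith),
      mul_pos h3 (show 0 < 1/4 - (p.1 - p.2) by linarith)]
  rw [correction, div_lt_iff₀ (by linarith)]
  nlinarith [mul_lt_mul_of_pos_right hyz h3]

theorem mul_le_correction : 1/4 * ((p.1 - 1/4) * p.2) ≤ correction p := by
  obtain ⟨h1, h2, h3, h4⟩ := hp
  -- `z ≤ 7/32 < 1/4 < y` gives `y ≤ 16 (y - z)`.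
  have hyz : p.1 ≤ 16 * (p.1 - p.2) := by linarith
  rw [correction, le_div_iff₀ (by linarith)]
  nlinarith [mul_le_mul_of_nonneg_left hyz
    (mul_nonneg (show 0 ≤ 4 * p.1 - 1 by linarith) h3.le)]

theorem snd_F_le : (F p).2 ≤ p.2 - 1/4 * ((p.1 - 1/4) * p.2) := by
  rw [F_eq]
  linarith [mul_le_correction hp]

end trappingRegion

theorem mapsTo_F_trappingRegion : MapsTo F trappingRegion trappingRegion := fun p hp => by
  have hA := correction_lt_fst_sub hp
  have hB := correction_lt_snd hp
  have hC := mul_le_correction hp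
  obtain ⟨h1, h2, h3, h4⟩ := hp
  have hC' : 0 ≤ 1/4 * ((p.1 - 1/4) * p.2) :=
    mul_nonneg (by norm_num) (mul_nonneg (by linarith) h3.le)
  rw [F_eq]
  exact ⟨by linarith, by linarith, by linarith, by linarith⟩

/-- The orbit of the reduced local structure map started at
`(y₁, z₁) = (3/8, 7/32)` converges to `(1/4, 0)`. -/
theorem reduced_local_structure_orbit_converges :
    Tendsto (fun n : ℕ => F^[n] (3/8, 7/32)) atTop
      (nhds ((1/4 : ℝ), (0 : ℝ))) := by
  set p : ℕ → ℝ × ℝ := fun n => F^[n] (3/8, 7/32)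
  have hR : ∀ n, p n ∈ trappingRegion := fun n =>
    mapsTo_F_trappingRegion.iterate n (by norm_num [trappingRegion])
  have hstep : ∀ n, p (n + 1) = F (p n) := fun n => Function.iterate_succ_apply' F n _
  obtain ⟨hu, hz⟩ := tendsto_zero_of_add_succ_eq_of_le_sub_mul (u := fun n => (p n).1 - 1/4)
    (z := fun n => (p n).2) (c := 1/4) (by norm_num) (fun n => sub_nonneg.2 (hR n).1.le)
    (fun n => by rw [hstep, F_eq]; ring) (fun n => hstep n ▸ snd_F_le (hR n))
  have h := (hu.add_const (1/4 : ℝ)).prodMk_nhds hz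
  simp only [sub_add_cancel, zero_add] at h
  exact h
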